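/- Let $C_1$ and $C_2$ be circles of radii $r_1 < r_2$ with centers $c_1, c_2$ having nonpositive $y$-coordinate, and let $p_1, p_2$ be two distinct points with positive $y$-coordinate lying on both circles. Then for every point $x$ on the upper arc of $C_1$ between $p_1$ and $p_2$ (the arc lying above the $x$-axis) and the point $x'$ on the upper arc of $C_2$ with the same $x$-coordinate, $x$ lies strictly above $x'$ whenever $x \notin \{p_1, p_2\}$. -/

import Mathlib

/-!
Let `pow i z = |z - cᵢ|² - rᵢ²` be the power of `z` with respect to the circle `Cᵢ`. The difference
`pow 2 - pow 1` is affine and vanishes at `p₁` and `p₂`, so along a vertical line it equals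
`2 (b₁ - b₂)` times the height above the chord `p₁p₂`, where `bᵢ` is the height of `cᵢ`.
Strict convexity of the disc puts `x` strictly above the chord, and since both centers lie on the
perpendicular bisector below the chord, the smaller radius forces `b₂ < b₁`. Hence `pow 2 x > 0`:
`x` lies outside `C₂`, so above the point `x'` of `C₂` on the same vertical line.
-/

section CircleThroughTwoPoints

variable {a b r x₁ y₁ x₂ y₂ : ℝ}

lemma radius_sq_mul_of_two_points (h₁ : (x₁ - a) ^ 2 + (y₁ - b) ^ 2 = r ^ 2)
    (h₂ : (x₂ - a) ^ 2 + (y₂ - b) ^ 2 = r ^ 2) :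
    4 * r ^ 2 * (x₂ - x₁) ^ 2 =
      ((x₂ - x₁) ^ 2 + (y₂ - y₁) ^ 2) * ((x₂ - x₁) ^ 2 + (y₁ + y₂ - 2 * b) ^ 2) := by
  have hperp : (2 * a - x₁ - x₂) * (x₂ - x₁) + (2 * b - y₁ - y₂) * (y₂ - y₁) = 0 := by
    linear_combination h₁ - h₂
  linear_combination (-2 * (x₂ - x₁) ^ 2) * h₁ - (2 * (x₂ - x₁) ^ 2) * h₂
    + ((2 * a - x₁ - x₂) * (x₂ - x₁) - (2 * b - y₁ - y₂) * (y₂ - y₁)) * hperp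

/-- `(x₂ - X) * y₁ + (X - x₁) * y₂` is `x₂ - x₁` times the height of the chord at abscissa `X`. -/
lemma chord_lt_of_upper_arc {X Y : ℝ} (h₁ : (x₁ - a) ^ 2 + (y₁ - b) ^ 2 = r ^ 2)
    (h₂ : (x₂ - a) ^ 2 + (y₂ - b) ^ 2 = r ^ 2) (h : (X - a) ^ 2 + (Y - b) ^ 2 = r ^ 2)
    (hX₁ : x₁ < X) (hX₂ : X < x₂) (hY : b < Y) :
    (x₂ - X) * y₁ + (X - x₁) * y₂ < Y * (x₂ - x₁) := by
  have hw : 0 < x₂ - x₁ := by linarith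
  have hinside : ((x₂ - X) * y₁ + (X - x₁) * y₂ - b * (x₂ - x₁)) ^ 2 <
      ((Y - b) * (x₂ - x₁)) ^ 2 := by
    have hgap : 0 < (X - x₁) * (x₂ - X) * ((x₂ - x₁) ^ 2 + (y₁ - y₂) ^ 2) := by
      have : 0 < (x₂ - x₁) ^ 2 + (y₁ - y₂) ^ 2 := by positivity
      exact mul_pos (mul_pos (by linarith) (by linarith)) this
    linear_combination hgap + ((x₂ - X) ^ 2 + (X - x₁) * (x₂ - X)) * h₁ +
      ((X - x₁) ^ 2 + (X - x₁) * (x₂ - X)) * h₂ - (x₂ - x₁) ^ 2 * h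
  linarith [(abs_lt_of_sq_lt_sq' hinside (by positivity)).2]

end CircleThroughTwoPoints

section TwoCirclesThroughTwoPoints

variable {a₁ b₁ r₁ a₂ b₂ r₂ x₁ y₁ x₂ y₂ : ℝ}
  (h₁₁ : (x₁ - a₁) ^ 2 + (y₁ - b₁) ^ 2 = r₁ ^ 2) (h₂₁ : (x₂ - a₁) ^ 2 + (y₂ - b₁) ^ 2 = r₁ ^ 2)
  (h₁₂ : (x₁ - a₂) ^ 2 + (y₁ - b₂) ^ 2 = r₂ ^ 2) (h₂₂ : (x₂ - a₂) ^ 2 + (y₂ - b₂) ^ 2 = r₂ ^ 2)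
include h₁₁ h₂₁ h₁₂ h₂₂

lemma center_lt_of_radius_lt (hx : x₁ ≠ x₂) (hr : r₁ ^ 2 < r₂ ^ 2)
    (hb₂ : 2 * b₂ < y₁ + y₂) : b₂ < b₁ := by
  have hw : 0 < (x₂ - x₁) ^ 2 := by
    have := sub_ne_zero.2 hx.symm
    positivity
  have hsq : (y₁ + y₂ - 2 * b₁) ^ 2 < (y₁ + y₂ - 2 * b₂) ^ 2 := by
    have h : 4 * r₁ ^ 2 * (x₂ - x₁) ^ 2 < 4 * r₂ ^ 2 * (x₂ - x₁) ^ 2 := by gcongr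
    rw [radius_sq_mul_of_two_points h₁₁ h₂₁, radius_sq_mul_of_two_points h₁₂ h₂₂] at h
    have := lt_of_mul_lt_mul_left h (by positivity)
    linarith
  linarith [(abs_lt_of_sq_lt_sq' hsq (by linarith)).2]

lemma power_sub_power_mul_eq (X Y : ℝ) :
    ((X - a₂) ^ 2 + (Y - b₂) ^ 2 - r₂ ^ 2 - ((X - a₁) ^ 2 + (Y - b₁) ^ 2 - r₁ ^ 2)) * (x₂ - x₁) =
      2 * (b₁ - b₂) * (Y * (x₂ - x₁) - ((x₂ - X) * y₁ + (X - x₁) * y₂)) := by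
  linear_combination (x₂ - X) * h₁₂ - (x₂ - X) * h₁₁ + (X - x₁) * h₂₂ - (X - x₁) * h₂₁

end TwoCirclesThroughTwoPoints

lemma upper_arc_lt_of_radius_lt {a₁ b₁ r₁ a₂ b₂ r₂ x₁ y₁ x₂ y₂ X Y Y' : ℝ}
    (h₁₁ : (x₁ - a₁) ^ 2 + (y₁ - b₁) ^ 2 = r₁ ^ 2) (h₂₁ : (x₂ - a₁) ^ 2 + (y₂ - b₁) ^ 2 = r₁ ^ 2)
    (h₁₂ : (x₁ - a₂) ^ 2 + (y₁ - b₂) ^ 2 = r₂ ^ 2) (h₂₂ : (x₂ - a₂) ^ 2 + (y₂ - b₂) ^ 2 = r₂ ^ 2)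
    (hr : r₁ ^ 2 < r₂ ^ 2) (hb₂ : 2 * b₂ < y₁ + y₂) (hX₁ : x₁ < X) (hX₂ : X < x₂)
    (h : (X - a₁) ^ 2 + (Y - b₁) ^ 2 = r₁ ^ 2) (hY : b₁ < Y)
    (h' : (X - a₂) ^ 2 + (Y' - b₂) ^ 2 = r₂ ^ 2) : Y' < Y := by
  have hb : b₂ < b₁ := center_lt_of_radius_lt h₁₁ h₂₁ h₁₂ h₂₂ (by linarith) hr hb₂
  have hchord := chord_lt_of_upper_arc h₁₁ h₂₁ h hX₁ hX₂ hY
  have hout : r₂ ^ 2 < (X - a₂) ^ 2 + (Y - b₂) ^ 2 := by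
    have hpow := power_sub_power_mul_eq h₁₁ h₂₁ h₁₂ h₂₂ X Y
    rw [h, sub_self, sub_zero] at hpow
    have hprod : 0 < 2 * (b₁ - b₂) * (Y * (x₂ - x₁) - ((x₂ - X) * y₁ + (X - x₁) * y₂)) := by
      have := sub_pos.2 hb
      have := sub_pos.2 hchord
      positivity
    rw [← hpow] at hprod
    linarith [pos_of_mul_pos_left hprod (by linarith : (0 : ℝ) ≤ x₂ - x₁)]
  have hsq : (Y' - b₂) ^ 2 < (Y - b₂) ^ 2 := by linarith
  linarith [(abs_lt_of_sq_lt_sq' hsq (by linarith)).2]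

lemma sub_sq_add_sub_sq_eq_of_dist_eq {p q : EuclideanSpace ℝ (Fin 2)} {r : ℝ}
    (h : dist p q = r) : (p 0 - q 0) ^ 2 + (p 1 - q 1) ^ 2 = r ^ 2 := by
  simp [← h, EuclideanSpace.dist_sq_eq, Fin.sum_univ_two, Real.dist_eq, sq_abs]

theorem stmt3_general (c₁ c₂ p₁ p₂ x x' : EuclideanSpace ℝ (Fin 2)) (r₁ r₂ : ℝ)
    (hr : r₁ < r₂) (hc₁ : c₁ 1 ≤ 0) (hc₂ : c₂ 1 ≤ 0)
    (hp₁ : 0 < p₁ 1) (hp₂ : 0 < p₂ 1)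
    (h₁₁ : dist p₁ c₁ = r₁) (h₂₁ : dist p₂ c₁ = r₁)
    (h₁₂ : dist p₁ c₂ = r₂) (h₂₂ : dist p₂ c₂ = r₂)
    (hx : dist x c₁ = r₁) (hxy : 0 < x 1)
    (hb₁ : min (p₁ 0) (p₂ 0) < x 0) (hb₂ : x 0 < max (p₁ 0) (p₂ 0))
    (hx' : dist x' c₂ = r₂) (hxx' : x' 0 = x 0) :
    x' 1 < x 1 := by
  wlog hp : p₁ 0 ≤ p₂ 0 generalizing p₁ p₂
  · exact this p₂ p₁ hp₂ hp₁ h₂₁ h₁₁ h₂₂ h₁₂ (by rwa [min_comm]) (by rwa [max_comm])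
      (le_of_not_ge hp)
  rw [min_eq_left hp] at hb₁
  rw [max_eq_right hp] at hb₂
  have hr₂ : r₁ ^ 2 < r₂ ^ 2 := pow_lt_pow_left₀ hr (h₁₁ ▸ dist_nonneg) two_ne_zero
  have hx'' : (x 0 - c₂ 0) ^ 2 + (x' 1 - c₂ 1) ^ 2 = r₂ ^ 2 := by
    rw [← hxx']
    exact sub_sq_add_sub_sq_eq_of_dist_eq hx'
  exact upper_arc_lt_of_radius_lt (sub_sq_add_sub_sq_eq_of_dist_eq h₁₁)
    (sub_sq_add_sub_sq_eq_of_dist_eq h₂₁) (sub_sq_add_sub_sq_eq_of_dist_eq h₁₂)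
    (sub_sq_add_sub_sq_eq_of_dist_eq h₂₂) hr₂ (by linarith) hb₁ hb₂
    (sub_sq_add_sub_sq_eq_of_dist_eq hx) (by linarith) hx''

/-- Between two common points above the x-axis, the upper arc of the smaller circle
(with center below the x-axis) lies strictly above the upper arc of the larger circle. -/
theorem stmt3 (c₁ c₂ p₁ p₂ x x' : EuclideanSpace ℝ (Fin 2)) (r₁ r₂ : ℝ)
    (hr : r₁ < r₂) (hc₁ : c₁ 1 ≤ 0) (hc₂ : c₂ 1 ≤ 0)
    (hp₁ : 0 < p₁ 1) (hp₂ : 0 < p₂ 1) (hne : p₁ ≠ p₂)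
    (h₁₁ : dist p₁ c₁ = r₁) (h₂₁ : dist p₂ c₁ = r₁)
    (h₁₂ : dist p₁ c₂ = r₂) (h₂₂ : dist p₂ c₂ = r₂)
    (hx : dist x c₁ = r₁) (hxy : 0 < x 1)
    (hb₁ : min (p₁ 0) (p₂ 0) < x 0) (hb₂ : x 0 < max (p₁ 0) (p₂ 0))
    (hx' : dist x' c₂ = r₂) (hx'y : 0 < x' 1) (hxx' : x' 0 = x 0)
    (hxne₁ : x ≠ p₁) (hxne₂ : x ≠ p₂) :
    x' 1 < x 1 :=
  stmt3_general c₁ c₂ p₁ p₂ x x' r₁ r₂ hr hc₁ hc₂ hp₁ hp₂ h₁₁ h₂₁ h₁₂ h₂₂ hx hxy hb₁ hb₂ hx' hxx'
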